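/- arXiv:2505.13170 — 3 statements merged into one kernel-verified Lean document; each statement's English description precedes it below -/
import Mathlib

section
/- Let X be a nonnegative random variable with finite variance and E[X] > 0. Then E[1/(1+X)] ≤ (1 + sqrt(Var(X))) / E[X]. -/
/-!
Since `m - x ≤ |x - m|`, every `x ≥ 0` satisfies `m ≤ (1 + x) (1 + |x - m|)`, i.e.
`1 / (1 + x) ≤ (1 + |x - m|) / m`. Taking `m = E[X]` and integrating gives
`E[1 / (1 + X)] ≤ (1 + E|X - E[X]|) / E[X]`, and `E|X - E[X]| ≤ √Var(X)` by Cauchy–Schwarz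
(the variance of `|X - E[X]|` is nonnegative).
-/

open MeasureTheory ProbabilityTheory

lemma one_div_one_add_le_one_add_abs_sub_div {x m : ℝ} (hx : 0 ≤ x) (hm : 0 < m) :
    1 / (1 + x) ≤ (1 + |x - m|) / m := by
  rw [div_le_div_iff₀ (by linarith) hm]
  have h : m - x ≤ |x - m| := abs_sub_comm x m ▸ le_abs_self _
  nlinarith [mul_nonneg (abs_nonneg (x - m)) hx]

section

variable {Ω : Type*} [MeasurableSpace Ω] {μ : Measure Ω} {X : Ω → ℝ}

lemma integrable_one_div_one_add [IsFiniteMeasure μ] (hX : AEStronglyMeasurable X μ)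
    (hX0 : ∀ᵐ ω ∂μ, 0 ≤ X ω) : Integrable (fun ω ↦ 1 / (1 + X ω)) μ := by
  refine (integrable_const 1).mono'
    (aemeasurable_const.div (aemeasurable_const.add hX.aemeasurable)).aestronglyMeasurable ?_
  filter_upwards [hX0] with ω hω
  rw [Real.norm_of_nonneg (by positivity), div_le_one (by positivity)]
  linarith

lemma integral_abs_sub_integral_le_sqrt_variance [IsProbabilityMeasure μ] (hX : MemLp X 2 μ) :
    ∫ ω, |X ω - μ[X]| ∂μ ≤ √(Var[X; μ]) := by
  have hY : MemLp (fun ω ↦ |X ω - μ[X]|) 2 μ := (hX.sub (memLp_const _)).abs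
  have hsq : μ[(fun ω ↦ |X ω - μ[X]|) ^ 2] = Var[X; μ] := by
    rw [variance_eq_integral hX.aemeasurable]
    simp [sq_abs]
  apply Real.le_sqrt_of_sq_le
  linarith [variance_nonneg (fun ω ↦ |X ω - μ[X]|) μ, variance_eq_sub hY]

end

open MeasureTheory ProbabilityTheory in
theorem stmt_3_general {Ω : Type*} [MeasurableSpace Ω] (μ : Measure Ω) [IsProbabilityMeasure μ]
    (X : Ω → ℝ) (hX0 : ∀ ω, 0 ≤ X ω)
    (hL2 : MemLp X 2 μ) (hEX : 0 < ∫ ω, X ω ∂μ) :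
    ∫ ω, 1 / (1 + X ω) ∂μ ≤ (1 + Real.sqrt (variance X μ)) / ∫ ω, X ω ∂μ := by
  set m := ∫ ω, X ω ∂μ
  have hdev : Integrable (fun ω ↦ |X ω - m|) μ :=
    ((hL2.sub (memLp_const m)).abs).integrable one_le_two
  calc ∫ ω, 1 / (1 + X ω) ∂μ ≤ ∫ ω, (1 + |X ω - m|) / m ∂μ :=
        integral_mono (integrable_one_div_one_add hL2.aestronglyMeasurable (ae_of_all _ hX0))
          (((integrable_const 1).add hdev).div_const m)
          fun ω ↦ one_div_one_add_le_one_add_abs_sub_div (hX0 ω) hEX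
    _ = (1 + ∫ ω, |X ω - m| ∂μ) / m := by
        rw [integral_div, integral_add (integrable_const 1) hdev, integral_const, probReal_univ,
          one_smul]
    _ ≤ (1 + Real.sqrt (variance X μ)) / m := by
        gcongr
        exact integral_abs_sub_integral_le_sqrt_variance hL2

open MeasureTheory ProbabilityTheory in
theorem stmt_3 {Ω : Type*} [MeasurableSpace Ω] (μ : Measure Ω) [IsProbabilityMeasure μ]
    (X : Ω → ℝ) (hX : Measurable X) (hX0 : ∀ ω, 0 ≤ X ω)
    (hL2 : MemLp X 2 μ) (hEX : 0 < ∫ ω, X ω ∂μ) :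
    ∫ ω, 1 / (1 + X ω) ∂μ ≤ (1 + Real.sqrt (variance X μ)) / ∫ ω, X ω ∂μ :=
  stmt_3_general μ X hX0 hL2 hEX
end

section
/- Let H, A be bounded operators on a Hilbert space with H self-adjoint. Then the operator (HA − AH)(HA − AH)* satisfies the inequality [H,A][H,A]* ≤ 2( ‖A‖² H² + A H² A* ). -/
/-!
With `X = K A` and `Y = A K` one has `2 (X X* + Y Y*) - (X - Y)(X - Y)* = (X + Y)(X + Y)* ≥ 0`.
Since `K` is self-adjoint, `Y Y* = A K² A*`, and conjugating `A A* ≤ ‖A‖²` by `K` gives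
`X X* = K A A* K ≤ ‖A‖² K²`. All of this holds in any C*-algebra, and positivity of an operator
on a Hilbert space is nonnegativity in its C*-algebra order.
-/

theorem sub_mul_star_sub_le_two_nsmul {R : Type*} [NonUnitalRing R] [StarRing R] [PartialOrder R]
    [StarOrderedRing R] (x y : R) :
    (x - y) * star (x - y) ≤ 2 • (x * star x + y * star y) := by
  have key : 2 • (x * star x + y * star y) - (x - y) * star (x - y) = (x + y) * star (x + y) := by
    simp only [star_add, star_sub]
    noncomm_ring
  rw [← sub_nonneg, key]
  exact mul_star_self_nonneg _

theorem IsSelfAdjoint.mul_mul_star_mul_eq {R : Type*} [Semigroup R] [StarMul R] {k : R}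
    (hk : IsSelfAdjoint k) (a : R) :
    a * k * star (a * k) = a * (k * k) * star a := by
  rw [star_mul, hk.star_eq]
  simp only [mul_assoc]

namespace IsSelfAdjoint

variable {A : Type*} [CStarAlgebra A] [PartialOrder A] [StarOrderedRing A] {k : A}

theorem mul_mul_star_mul_le (hk : IsSelfAdjoint k) (a : A) :
    k * a * star (k * a) ≤ ‖a‖ ^ 2 • (k * k) := by
  calc k * a * star (k * a) = k * (a * star a) * k := by
        rw [star_mul, hk.star_eq]
        simp only [mul_assoc]
    _ ≤ k * algebraMap ℝ A (‖a‖ ^ 2) * k :=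
        hk.conjugate_le_conjugate CStarAlgebra.mul_star_le_algebraMap_norm_sq
    _ = ‖a‖ ^ 2 • (k * k) := by
        rw [Algebra.algebraMap_eq_smul_one, mul_smul_comm, mul_one, smul_mul_assoc]

theorem commutator_mul_star_le (hk : IsSelfAdjoint k) (a : A) :
    (k * a - a * k) * star (k * a - a * k) ≤
      (2 : ℝ) • (‖a‖ ^ 2 • (k * k) + a * (k * k) * star a) := by
  calc (k * a - a * k) * star (k * a - a * k)
      ≤ 2 • (k * a * star (k * a) + a * k * star (a * k)) := sub_mul_star_sub_le_two_nsmul _ _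
    _ ≤ (2 : ℝ) • (‖a‖ ^ 2 • (k * k) + a * (k * k) * star a) := by
        rw [ofNat_smul_eq_nsmul ℝ 2, hk.mul_mul_star_mul_eq]
        gcongr
        exact hk.mul_mul_star_mul_le a

end IsSelfAdjoint

open ContinuousLinearMap in
theorem stmt_13 {𝓗 : Type*} [NormedAddCommGroup 𝓗] [InnerProductSpace ℂ 𝓗] [CompleteSpace 𝓗]
    (K A : 𝓗 →L[ℂ] 𝓗) (hK : adjoint K = K) :
    ((2 : ℝ) • ((‖A‖ ^ 2 : ℝ) • (K * K) + A * (K * K) * adjoint A)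
      - (K * A - A * K) * adjoint (K * A - A * K)).IsPositive := by
  have hK_selfAdjoint : IsSelfAdjoint K := (star_eq_adjoint K).trans hK
  rw [← nonneg_iff_isPositive, sub_nonneg]
  simpa only [star_eq_adjoint] using hK_selfAdjoint.commutator_mul_star_le A
end

section
/- Let F_n : S → ℂ be a sequence of continuous functions on the closed strip S = {z ∈ ℂ : −β ≤ Im z ≤ 0} (β > 0), holomorphic in the interior, uniformly bounded by M, such that the boundary restrictions F_n(t) and F_n(t − iβ) converge uniformly on compact subsets of ℝ to continuous functions g, h : ℝ → ℂ. Then F_n converges locally uniformly on S to a continuous function F, holomorphic in the interior of S, with F(t) = g(t) and F(t − iβ) = h(t) for all t ∈ ℝ. -/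
/-!
`F m - F n` is bounded by `2M` on the strip. Dividing it by `1 + (z - x₀)² / (2β²)` and applying
the Phragmén–Lindelöf principle bounds it at any point above `x₀` by twice its size on the two
boundary segments within distance `R` of `x₀`, where `R` is large in terms of `M`, `β` and the
tolerance. Hence uniform Cauchy convergence on compact pieces of the boundary propagates to compact
subsets of the strip; the limit is continuous, holomorphic inside by Weierstrass' theorem, and has
boundary values `g` and `h`.
-/

open Complex Filter Set Topology

/-- Dividing by this weight makes a bounded function on the strip `|im z| ≤ β` small far from `x₀`
without enlarging it on the vertical line through `x₀`. -/
noncomputable def stripWeight (β x₀ : ℝ) (z : ℂ) : ℂ :=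
  1 + ((2 * β ^ 2)⁻¹ : ℝ) * (z - x₀) ^ 2

section stripWeight

variable {β x₀ : ℝ} {z : ℂ}

lemma stripWeight_re :
    (stripWeight β x₀ z).re = 1 + (2 * β ^ 2)⁻¹ * ((z.re - x₀) ^ 2 - z.im ^ 2) := by
  simp [stripWeight, sq]

lemma sq_add_sq_le_mul_norm_stripWeight (hβ : β ≠ 0) (hz : z.im ^ 2 ≤ β ^ 2) :
    β ^ 2 + (z.re - x₀) ^ 2 ≤ 2 * β ^ 2 * ‖stripWeight β x₀ z‖ := by
  have hβ2 : 0 < 2 * β ^ 2 := by positivity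
  have hre : 2 * β ^ 2 * (stripWeight β x₀ z).re = 2 * β ^ 2 + (z.re - x₀) ^ 2 - z.im ^ 2 := by
    rw [stripWeight_re]
    field_simp
    ring
  nlinarith [re_le_norm (stripWeight β x₀ z)]

lemma one_le_two_mul_norm_stripWeight (hβ : β ≠ 0) (hz : z.im ^ 2 ≤ β ^ 2) :
    1 ≤ 2 * ‖stripWeight β x₀ z‖ := by
  have := sq_add_sq_le_mul_norm_stripWeight (x₀ := x₀) hβ hz
  have hβ2 : 0 < β ^ 2 := by positivity
  nlinarith [sq_nonneg (z.re - x₀)]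

lemma le_mul_norm_stripWeight_of_le_abs_re {C ε R : ℝ} (hβ : β ≠ 0) (hz : z.im ^ 2 ≤ β ^ 2)
    (hε : 0 ≤ ε) (hR : 0 ≤ R) (hfar : R ≤ |z.re - x₀|) (hCR : 2 * β ^ 2 * C ≤ ε * R ^ 2) :
    C ≤ ε * ‖stripWeight β x₀ z‖ := by
  have hR2 : R ^ 2 ≤ (z.re - x₀) ^ 2 := by
    rw [← sq_abs (z.re - x₀)]
    exact pow_le_pow_left₀ hR hfar 2
  have hw := sq_add_sq_le_mul_norm_stripWeight (x₀ := x₀) hβ hz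
  have hβ2 : 0 < 2 * β ^ 2 := by positivity
  refine le_of_mul_le_mul_left ?_ hβ2
  nlinarith

lemma stripWeight_ne_zero (hβ : β ≠ 0) (hz : z.im ^ 2 ≤ β ^ 2) : stripWeight β x₀ z ≠ 0 := by
  rw [← norm_pos_iff]
  linarith [one_le_two_mul_norm_stripWeight (x₀ := x₀) hβ hz]

lemma norm_stripWeight_re_le_one (hβ : β ≠ 0) (hz : z.im ^ 2 ≤ β ^ 2) :
    ‖stripWeight β z.re z‖ ≤ 1 := by
  have hw : stripWeight β z.re z = ((1 - (2 * β ^ 2)⁻¹ * z.im ^ 2 : ℝ) : ℂ) := by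
    have hz' : z - z.re = z.im * I := Complex.ext (by simp) (by simp)
    rw [stripWeight, hz', mul_pow, I_sq]
    push_cast
    ring
  have hβ2 : 0 < 2 * β ^ 2 := by positivity
  have h₀ : 0 ≤ (2 * β ^ 2)⁻¹ * z.im ^ 2 := by positivity
  have h₁ : (2 * β ^ 2)⁻¹ * z.im ^ 2 ≤ 2 := by
    rw [inv_mul_le_iff₀ hβ2]
    linarith
  rw [hw, norm_real, Real.norm_eq_abs, abs_le]
  constructor <;> linarith

lemma differentiable_stripWeight : Differentiable ℂ (stripWeight β x₀) := by
  unfold stripWeight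
  fun_prop

end stripWeight

lemma closure_preimage_im_Ioo {a b : ℝ} (hab : a ≠ b) :
    closure (im ⁻¹' Ioo a b) = im ⁻¹' Icc a b := by
  rw [closure_preimage_im, closure_Ioo hab]

lemma sq_im_le_sq_of_mem_preimage_im_Icc {β : ℝ} (hβ : 0 ≤ β) {z : ℂ}
    (hz : z ∈ im ⁻¹' Icc (-β) 0) : z.im ^ 2 ≤ β ^ 2 :=
  sq_le_sq' hz.1 (hz.2.trans hβ)

section UniformCauchy

variable {E : Type*} [NormedAddCommGroup E] [NormedSpace ℂ E]

/-- Phragmén–Lindelöf applied to `f / stripWeight β (re z₀)`. -/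
theorem norm_le_two_mul_of_boundary_near_le {β C ε R : ℝ} (hβ : 0 < β) (hR : 0 < R)
    {f : ℂ → E} (hf : DiffContOnCl ℂ f (im ⁻¹' Ioo (-β) 0))
    (hfC : ∀ z ∈ im ⁻¹' Icc (-β) 0, ‖f z‖ ≤ C) (hCR : 2 * β ^ 2 * C ≤ ε * R ^ 2)
    {z₀ : ℂ} (hz₀ : z₀ ∈ im ⁻¹' Icc (-β) 0)
    (hnear : ∀ z : ℂ, (z.im = 0 ∨ z.im = -β) → |z.re - z₀.re| ≤ R → ‖f z‖ ≤ ε) :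
    ‖f z₀‖ ≤ 2 * ε := by
  set w := stripWeight β z₀.re
  have hsq : ∀ z ∈ im ⁻¹' Icc (-β) 0, z.im ^ 2 ≤ β ^ 2 :=
    fun z hz => sq_im_le_sq_of_mem_preimage_im_Icc hβ.le hz
  have hbdry_mem : ∀ z : ℂ, (z.im = 0 ∨ z.im = -β) → z ∈ im ⁻¹' Icc (-β) 0 := by
    rintro z (hz | hz) <;> simp [hz, hβ.le]
  have hε : 0 ≤ ε := (norm_nonneg _).trans (hnear z₀.re (by simp) (by simpa using hR.le))
  set G : ℂ → E := fun z => (w z)⁻¹ • f z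
  have hG_le : ∀ z ∈ im ⁻¹' Icc (-β) 0, ∀ c, ‖f z‖ ≤ c * ‖w z‖ → ‖G z‖ ≤ c := by
    intro z hz c hc
    have hw : 0 < ‖w z‖ := norm_pos_iff.2 (stripWeight_ne_zero hβ.ne' (hsq z hz))
    rw [norm_smul, norm_inv, inv_mul_eq_div, div_le_iff₀ hw]
    exact hc
  have hGd : DiffContOnCl ℂ G (im ⁻¹' Ioo (-β) 0) := by
    refine (differentiable_stripWeight.diffContOnCl.inv fun z hz => ?_).smul hf
    rw [closure_preimage_im_Ioo (by linarith)] at hz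
    exact stripWeight_ne_zero hβ.ne' (hsq z hz)
  have hGC : ∀ z ∈ im ⁻¹' Icc (-β) 0, ‖G z‖ ≤ 2 * C := by
    intro z hz
    have hw2 := one_le_two_mul_norm_stripWeight (x₀ := z₀.re) hβ.ne' (hsq z hz)
    have hC : 0 ≤ C := (norm_nonneg _).trans (hfC z hz)
    exact hG_le z hz _ (by nlinarith [hfC z hz])
  have hGbdry : ∀ z : ℂ, (z.im = 0 ∨ z.im = -β) → ‖G z‖ ≤ 2 * ε := by
    intro z hz
    have hzS := hbdry_mem z hz
    have hw2 := one_le_two_mul_norm_stripWeight (x₀ := z₀.re) hβ.ne' (hsq z hzS)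
    refine hG_le z hzS _ ?_
    rcases le_or_gt |z.re - z₀.re| R with hnear' | hfar
    · nlinarith [hnear z hz hnear']
    · have := le_mul_norm_stripWeight_of_le_abs_re hβ.ne' (hsq z hzS) hε hR.le hfar.le hCR
      nlinarith [hfC z hzS]
  have hG : ‖G z₀‖ ≤ 2 * ε := by
    refine PhragmenLindelof.horizontal_strip hGd ⟨0, by simpa using div_pos Real.pi_pos hβ, 0, ?_⟩
      (fun z hz => hGbdry z (.inr hz)) (fun z hz => hGbdry z (.inl hz)) hz₀.1 hz₀.2
    refine Asymptotics.IsBigO.of_bound (2 * C) (eventually_inf_principal.2 (.of_forall ?_))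
    intro z hz
    simpa using hGC z ⟨hz.1.le, hz.2.le⟩
  calc ‖f z₀‖ = ‖w z₀‖ * ‖G z₀‖ := by
        simp [G, norm_smul, stripWeight_ne_zero hβ.ne' (hsq z₀ hz₀), w]
    _ ≤ 1 * (2 * ε) :=
        mul_le_mul (norm_stripWeight_re_le_one hβ.ne' (hsq z₀ hz₀)) hG (norm_nonneg _) zero_le_one
    _ = 2 * ε := one_mul _

theorem uniformCauchySeqOn_strip_of_boundary {ι : Type*} {p : Filter ι} {β M : ℝ} (hβ : 0 < β)
    {F : ι → ℂ → E} (hF : ∀ i, DiffContOnCl ℂ (F i) (im ⁻¹' Ioo (-β) 0))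
    (hM : ∀ i, ∀ z ∈ im ⁻¹' Icc (-β) 0, ‖F i z‖ ≤ M)
    (hbot : ∀ L : Set ℝ, IsCompact L → UniformCauchySeqOn (fun i (t : ℝ) => F i t) p L)
    (htop : ∀ L : Set ℝ, IsCompact L →
      UniformCauchySeqOn (fun i (t : ℝ) => F i (t - I * β)) p L)
    {K : Set ℂ} (hK : IsCompact K) (hKS : K ⊆ im ⁻¹' Icc (-β) 0) :
    UniformCauchySeqOn F p K := by
  obtain ⟨r, hr⟩ := hK.isBounded.subset_closedBall 0
  intro u hu
  obtain ⟨ε, hε, hεu⟩ := Metric.mem_uniformity_dist.1 hu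
  have hε3 : 0 < ε / 3 := by positivity
  set R := max 1 (2 * β ^ 2 * (2 * M) / (ε / 3))
  have hR : 1 ≤ R := le_max_left _ _
  have hCR : 2 * β ^ 2 * (2 * M) ≤ ε / 3 * R ^ 2 := by
    have h : 2 * β ^ 2 * (2 * M) ≤ ε / 3 * R := (div_le_iff₀' hε3).1 (le_max_right _ _)
    nlinarith [mul_le_mul_of_nonneg_left (show R ≤ R ^ 2 by nlinarith) hε3.le]
  filter_upwards [hbot _ isCompact_Icc _ (Metric.dist_mem_uniformity hε3),
    htop _ isCompact_Icc _ (Metric.dist_mem_uniformity hε3)] with ij hbot' htop' z hz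
  have hzr : |z.re| ≤ r := (abs_re_le_norm z).trans (by simpa using hr hz)
  have hmem : ∀ w : ℂ, |w.re - z.re| ≤ R → w.re ∈ Icc (-r - R) (r + R) := by
    intro w hw
    rw [abs_le] at hw hzr
    constructor <;> linarith
  have hij := norm_le_two_mul_of_boundary_near_le hβ (by linarith) ((hF ij.1).sub (hF ij.2))
    (fun w hw => (norm_sub_le _ _).trans (by linarith [hM ij.1 w hw, hM ij.2 w hw])) hCR (hKS hz)
  refine hεu (lt_of_le_of_lt ?_ (by linarith : 2 * (ε / 3) < ε))
  rw [dist_eq_norm]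
  refine hij fun w hw hwR => ?_
  rcases hw with hw | hw
  · have hw' : w = (w.re : ℂ) := Complex.ext (by simp) (by simp [hw])
    rw [hw', Pi.sub_apply, ← dist_eq_norm]
    exact (hbot' w.re (hmem w hwR)).le
  · have hw' : w = (w.re : ℂ) - I * β := Complex.ext (by simp) (by simp [hw])
    rw [hw', Pi.sub_apply, ← dist_eq_norm]
    exact (htop' w.re (hmem w hwR)).le

end UniformCauchy

theorem exists_tendstoUniformlyOn_of_uniformCauchySeqOn {ι α β : Type*} [TopologicalSpace α]
    [UniformSpace β] [CompleteSpace β] [Nonempty β] {p : Filter ι} [p.NeBot] {F : ι → α → β}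
    {s : Set α}
    (hF : ∀ K ⊆ s, IsCompact K → UniformCauchySeqOn F p K) :
    ∃ f : α → β, ∀ K ⊆ s, IsCompact K → TendstoUniformlyOn F f p K := by
  refine ⟨fun x => limUnder p (F · x), fun K hKs hK => (hF K hKs hK).tendstoUniformlyOn_of_tendsto
    fun x hx => tendsto_nhds_limUnder ?_⟩
  exact CompleteSpace.complete
    ((hF {x} (singleton_subset_iff.2 (hKs hx)) isCompact_singleton).cauchy_map rfl)

theorem IsClosed.tendstoLocallyUniformlyOn_of_forall_isCompact {ι α β : Type*}
    [TopologicalSpace α] [WeaklyLocallyCompactSpace α] [UniformSpace β] {p : Filter ι}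
    {F : ι → α → β} {f : α → β} {s : Set α} (hs : IsClosed s)
    (hF : ∀ K ⊆ s, IsCompact K → TendstoUniformlyOn F f p K) :
    TendstoLocallyUniformlyOn F f p s := by
  refine tendstoLocallyUniformlyOn_of_forall_exists_nhds fun x _ => ?_
  obtain ⟨K, hK, hKx⟩ := exists_compact_mem_nhds x
  exact ⟨s ∩ K, inter_mem_nhdsWithin s hKx, hF _ inter_subset_left (hK.inter_left hs)⟩

open Filter in
theorem stmt_16_general (β : ℝ) (hβ : 0 < β)
    (S : Set ℂ) (hS : S = {z : ℂ | -β ≤ z.im ∧ z.im ≤ 0})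
    (F : ℕ → ℂ → ℂ) (M : ℝ)
    (hcont : ∀ n, ContinuousOn (F n) S)
    (hholo : ∀ n, ∀ z : ℂ, -β < z.im → z.im < 0 → DifferentiableAt ℂ (F n) z)
    (hbound : ∀ n, ∀ z ∈ S, ‖F n z‖ ≤ M)
    (g h : ℝ → ℂ)
    (hgconv : ∀ K : Set ℝ, IsCompact K →
      TendstoUniformlyOn (fun n (t : ℝ) => F n (t : ℂ)) g atTop K)
    (hhconv : ∀ K : Set ℝ, IsCompact K →
      TendstoUniformlyOn (fun n (t : ℝ) => F n ((t : ℂ) - Complex.I * β)) h atTop K) :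
    ∃ Flim : ℂ → ℂ, ContinuousOn Flim S ∧
      (∀ z : ℂ, -β < z.im → z.im < 0 → DifferentiableAt ℂ Flim z) ∧
      (∀ t : ℝ, Flim (t : ℂ) = g t ∧ Flim ((t : ℂ) - Complex.I * β) = h t) ∧
      (∀ K : Set ℂ, K ⊆ S → IsCompact K →
        TendstoUniformlyOn (fun n => F n) Flim atTop K) := by
  change S = im ⁻¹' Icc (-β) 0 at hS
  subst hS
  have hU : IsOpen (im ⁻¹' Ioo (-β) 0) := isOpen_Ioo.preimage continuous_im
  have hFd : ∀ n, DiffContOnCl ℂ (F n) (im ⁻¹' Ioo (-β) 0) := fun n =>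
    ⟨fun z hz => (hholo n z hz.1 hz.2).differentiableWithinAt,
      by rw [closure_preimage_im_Ioo (by linarith)]; exact hcont n⟩
  obtain ⟨Flim, hFlim⟩ := exists_tendstoUniformlyOn_of_uniformCauchySeqOn
    fun K hKS hK => uniformCauchySeqOn_strip_of_boundary hβ hFd hbound
      (fun L hL => (hgconv L hL).uniformCauchySeqOn) (fun L hL => (hhconv L hL).uniformCauchySeqOn)
      hK hKS
  have hloc := (isClosed_Icc.preimage continuous_im).tendstoLocallyUniformlyOn_of_forall_isCompact
    hFlim
  have hFlimd : DifferentiableOn ℂ Flim (im ⁻¹' Ioo (-β) 0) :=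
    (hloc.mono fun z hz => ⟨hz.1.le, hz.2.le⟩).differentiableOn (.of_forall fun n => (hFd n).1) hU
  have hlim : ∀ z ∈ im ⁻¹' Icc (-β) 0, Tendsto (F · z) atTop (𝓝 (Flim z)) := fun z hz =>
    (hFlim {z} (singleton_subset_iff.2 hz) isCompact_singleton).tendsto_at rfl
  refine ⟨Flim, hloc.continuousOn (.of_forall hcont),
    fun z h₁ h₂ => hFlimd.differentiableAt (hU.mem_nhds ⟨h₁, h₂⟩), fun t => ⟨?_, ?_⟩, hFlim⟩
  · exact tendsto_nhds_unique (hlim t (by simp [hβ.le]))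
      ((hgconv {t} isCompact_singleton).tendsto_at rfl)
  · exact tendsto_nhds_unique (hlim _ (by simp [hβ.le]))
      ((hhconv {t} isCompact_singleton).tendsto_at rfl)

open Filter in
theorem stmt_16 (β : ℝ) (hβ : 0 < β)
    (S : Set ℂ) (hS : S = {z : ℂ | -β ≤ z.im ∧ z.im ≤ 0})
    (F : ℕ → ℂ → ℂ) (M : ℝ)
    (hcont : ∀ n, ContinuousOn (F n) S)
    (hholo : ∀ n, ∀ z : ℂ, -β < z.im → z.im < 0 → DifferentiableAt ℂ (F n) z)
    (hbound : ∀ n, ∀ z ∈ S, ‖F n z‖ ≤ M)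
    (g h : ℝ → ℂ) (hg : Continuous g) (hh : Continuous h)
    (hgconv : ∀ K : Set ℝ, IsCompact K →
      TendstoUniformlyOn (fun n (t : ℝ) => F n (t : ℂ)) g atTop K)
    (hhconv : ∀ K : Set ℝ, IsCompact K →
      TendstoUniformlyOn (fun n (t : ℝ) => F n ((t : ℂ) - Complex.I * β)) h atTop K) :
    ∃ Flim : ℂ → ℂ, ContinuousOn Flim S ∧
      (∀ z : ℂ, -β < z.im → z.im < 0 → DifferentiableAt ℂ Flim z) ∧
      (∀ t : ℝ, Flim (t : ℂ) = g t ∧ Flim ((t : ℂ) - Complex.I * β) = h t) ∧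
      (∀ K : Set ℂ, K ⊆ S → IsCompact K →
        TendstoUniformlyOn (fun n => F n) Flim atTop K) :=
  stmt_16_general β hβ S hS F M hcont hholo hbound g h hgconv hhconv
end
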